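/- For all natural numbers k and j, M( binom(x−1, k) binom(x+k, k) · binom(x−1, j) binom(x+j, j) ) = (−1)^{k+j+1} (k+1)² (j+1)² / ( 2(k+j+3)(k+j+2) ). -/

import Mathlib

open Finset Polynomial


/-- The binomial polynomial `binom(x−1,k) = (x−1)(x−2)⋯(x−k)/k!` in `ℚ[X]`. -/
noncomputable def binomXm1 (k : ℕ) : Polynomial ℚ :=
  ((k.factorial : ℚ))⁻¹ • ∏ i ∈ range k, (X - C ((i : ℚ) + 1))

/-- The binomial polynomial `binom(x+k,k) = (x+k)(x+k−1)⋯(x+1)/k!` in `ℚ[X]`. -/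
noncomputable def binomXpk (k : ℕ) : Polynomial ℚ :=
  ((k.factorial : ℚ))⁻¹ • ∏ i ∈ range k, (X + C ((i : ℚ) + 1))

/-- The linear functional determined by `M(x^j) = (−1)^j B_{j+4} (j+5)/2`
(Bernoulli numbers with the convention `B₁ = −1/2`). -/
noncomputable def M (p : Polynomial ℚ) : ℚ :=
  p.sum fun j a => a * (-1) ^ j * _root_.bernoulli (j + 4) * ((j : ℚ) + 5) / 2

namespace MAux

/-- The auxiliary linear functional `L(∑ aₙ xⁿ) = ∑ aₙ B'ₙ` (Bernoulli, `B'₁ = 1/2`). -/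
noncomputable def L : Polynomial ℚ →ₗ[ℚ] ℚ where
  toFun p := p.sum fun n a => a * bernoulli' n
  map_add' p q := Polynomial.sum_add_index p q _ (fun n => by simp) (fun n a b => by ring)
  map_smul' c p := by
    simp only [RingHom.id_apply, smul_eq_mul]
    rw [Polynomial.sum_smul_index _ _ _ (fun n => by simp), Polynomial.sum_def,
      Polynomial.sum_def, Finset.mul_sum]
    exact Finset.sum_congr rfl fun n _ => by ring

lemma L_apply (p : Polynomial ℚ) : L p = p.sum fun n a => a * bernoulli' n := rfl

lemma L_monomial (n : ℕ) (a : ℚ) : L (monomial n a) = a * bernoulli' n := by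
  rw [L_apply]
  exact Polynomial.sum_monomial_index a _ (by simp)

lemma L_X_pow (n : ℕ) : L (X ^ n) = bernoulli' n := by
  rw [X_pow_eq_monomial, L_monomial, one_mul]

lemma L_delta_pow (n : ℕ) : L ((X + 1) ^ n) = L (X ^ n) + n := by
  have h : ((X + 1 : Polynomial ℚ)) ^ n
      = ∑ i ∈ range (n + 1), (n.choose i : ℚ) • X ^ i := by
    rw [add_pow]
    refine Finset.sum_congr rfl fun i _ => ?_
    rw [smul_eq_C_mul, one_pow, mul_one, C_eq_natCast]
    ring
  rw [h, map_sum]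
  simp only [map_smul, L_X_pow, smul_eq_mul]
  rw [Finset.sum_range_succ, Nat.choose_self, Nat.cast_one, one_mul, sum_bernoulli']
  ring

lemma L_delta (F : Polynomial ℚ) :
    L (F.comp (X + 1)) - L F = (derivative F).eval 1 := by
  induction F using Polynomial.induction_on' with
  | add p q hp hq =>
    rw [add_comp, map_add, map_add, derivative_add, eval_add, ← hp, ← hq]; ring
  | monomial n a =>
    rw [monomial_comp, derivative_monomial, eval_monomial, one_pow,
      ← smul_eq_C_mul, map_smul, smul_eq_mul, L_delta_pow, L_X_pow, L_monomial]
    ring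

lemma L_delta2 (H : Polynomial ℚ) :
    L (derivative (H.comp (X + 1))) - L (derivative H)
      = (derivative (derivative H)).eval 1 := by
  have hc : derivative (H.comp (X + 1)) = (derivative H).comp (X + 1) := by
    rw [derivative_comp]; simp
  rw [hc]
  exact L_delta (derivative H)

/-- `P m = ∏_{i=1}^{m} (X² − i²)`. -/
noncomputable def P (m : ℕ) : Polynomial ℚ :=
  ∏ i ∈ range m, (X ^ 2 - ((i : Polynomial ℚ) + 1) ^ 2)

/-- `g m = X ∏_{i=1}^{m} (X² − i²)`. -/
noncomputable def g (m : ℕ) : Polynomial ℚ := X * P m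

lemma P_succ (m : ℕ) : P (m + 1) = P m * (X ^ 2 - ((m : Polynomial ℚ) + 1) ^ 2) := by
  rw [P, prod_range_succ, P]

lemma g_succ (m : ℕ) : g (m + 1) = g m * (X ^ 2 - ((m : Polynomial ℚ) + 1) ^ 2) := by
  rw [g, g, P_succ, mul_assoc]

lemma g_shift (m : ℕ) :
    (X - (m : Polynomial ℚ)) * (g m).comp (X + 1)
      = (X + ((m : Polynomial ℚ) + 1)) * g m := by
  induction m with
  | zero => simp [g, P]; ring
  | succ m ih =>
    rw [g_succ]
    simp only [mul_comp, sub_comp, add_comp, pow_comp, X_comp, natCast_comp, one_comp]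
    push_cast
    linear_combination ((X - (m : Polynomial ℚ) - 1) * (X + (m : Polynomial ℚ) + 2)) * ih

/-- `T m = (X − (m+1)) g m`, the antidifference building block. -/
noncomputable def T (m : ℕ) : Polynomial ℚ := (X - ((m : Polynomial ℚ) + 1)) * g m

lemma delta_H (m n : ℕ) :
    (T m * T n).comp (X + 1) - T m * T n
      = (2 * (m : Polynomial ℚ) + 2 * (n : Polynomial ℚ) + 4) * (X * (g m * g n)) := by
  rw [T, T]
  simp only [mul_comp, sub_comp, add_comp, X_comp, natCast_comp, one_comp]
  linear_combination ((X - (n : Polynomial ℚ)) * ((g n).comp (X + 1))) * g_shift m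
    + ((X + (m : Polynomial ℚ) + 1) * g m) * g_shift n

lemma fact1 (m : ℕ) : ((m + 1).factorial : ℚ) = ((m : ℚ) + 1) * m.factorial := by
  rw [Nat.factorial_succ]; push_cast; ring

lemma fact2 (m : ℕ) : ((m + 2).factorial : ℚ)
    = ((m : ℚ) + 2) * ((m : ℚ) + 1) * m.factorial := by
  rw [show m + 2 = (m + 1) + 1 from rfl, Nat.factorial_succ]
  push_cast [fact1]; ring

lemma fact3 (m : ℕ) : ((m + 3).factorial : ℚ)
    = ((m : ℚ) + 3) * ((m : ℚ) + 2) * ((m : ℚ) + 1) * m.factorial := by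
  rw [show m + 3 = (m + 2) + 1 from rfl, Nat.factorial_succ]
  push_cast [fact2]; ring

lemma P_eval (m : ℕ) :
    (P (m + 1)).eval 1 = 0 ∧
      (derivative (P (m + 1))).eval 1 = (-1) ^ m * m.factorial * (m + 2).factorial := by
  induction m with
  | zero =>
    constructor
    · simp [P]
    · simp [P, derivative_sub, derivative_pow]
  | succ m ih =>
    obtain ⟨h0, h1⟩ := ih
    constructor
    · rw [P_succ]; simp [h0]
    · rw [P_succ, derivative_mul]
      simp only [eval_add, eval_mul, h0, h1, mul_zero, zero_mul, add_zero,
        eval_sub, eval_pow, eval_X, eval_one, eval_natCast]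
      rw [show m + 1 + 2 = m + 3 from rfl, fact3, fact2, fact1]
      push_cast
      ring

lemma T_eval1 (m : ℕ) : (T m).eval 1 = 0 := by
  cases m with
  | zero => simp [T, g, P]
  | succ m =>
    have := (P_eval m).1
    simp [T, g, eval_mul, this]

lemma T_deriv_eval1 (m : ℕ) :
    (derivative (T m)).eval 1 = (-1) ^ m * m.factorial * (m + 1).factorial := by
  cases m with
  | zero => simp [T, g, P]
  | succ m =>
    obtain ⟨h0, h1⟩ := P_eval m
    rw [T, g, derivative_mul, derivative_mul, derivative_X, derivative_sub, derivative_X,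
      derivative_add, derivative_natCast, derivative_one]
    simp only [eval_add, eval_mul, eval_sub, eval_X, eval_one, eval_natCast, h0, h1,
      one_mul, mul_zero, zero_mul, add_zero, zero_add, mul_one, eval_zero, sub_zero]
    rw [show m + 1 + 1 = m + 2 from rfl, fact2, fact1]
    push_cast
    ring

lemma H2_eval (m n : ℕ) :
    (derivative (derivative (T m * T n))).eval 1
      = 2 * ((-1) ^ m * m.factorial * (m + 1).factorial)
          * ((-1) ^ n * n.factorial * (n + 1).factorial) := by
  rw [derivative_mul, derivative_add, derivative_mul, derivative_mul]
  simp only [eval_add, eval_mul, T_eval1, T_deriv_eval1, mul_zero, zero_mul, add_zero,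
    zero_add]
  ring

lemma Lam1 (m n : ℕ) :
    L (derivative (X * (g m * g n)))
      = (-1) ^ (m + n) * m.factorial * (m + 1).factorial * n.factorial * (n + 1).factorial
        / ((m : ℚ) + (n : ℚ) + 2) := by
  have hc : (2 * (m : Polynomial ℚ) + 2 * (n : Polynomial ℚ) + 4)
      = C (2 * (m : ℚ) + 2 * (n : ℚ) + 4) := by
    simp [map_add, map_mul, map_ofNat, C_eq_natCast]
  have h2 : L (derivative ((T m * T n).comp (X + 1))) - L (derivative (T m * T n))
      = (2 * (m : ℚ) + 2 * (n : ℚ) + 4) * L (derivative (X * (g m * g n))) := by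
    rw [← map_sub, ← derivative_sub, delta_H m n, hc, ← smul_eq_C_mul, derivative_smul,
      map_smul, smul_eq_mul]
  have h3 : (2 * (m : ℚ) + 2 * (n : ℚ) + 4) * L (derivative (X * (g m * g n)))
      = 2 * ((-1) ^ m * m.factorial * (m + 1).factorial)
          * ((-1) ^ n * n.factorial * (n + 1).factorial) := by
    rw [← h2, L_delta2, H2_eval]
  have hd : ((m : ℚ) + (n : ℚ) + 2) ≠ 0 := by positivity
  rw [eq_div_iff hd]
  linear_combination (1 / 2) * h3

lemma X3_split (m n : ℕ) : (X : Polynomial ℚ) ^ 3 * (g m * g n)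
    = X * (g (m + 1) * g n) + C (((m : ℚ) + 1) ^ 2) * (X * (g m * g n)) := by
  rw [g_succ]
  have hc : C (((m : ℚ) + 1) ^ 2) = ((m : Polynomial ℚ) + 1) ^ 2 := by
    simp [map_pow, map_add, C_eq_natCast]
  rw [hc]
  ring

lemma Lam3 (m n : ℕ) :
    L (derivative ((X : Polynomial ℚ) ^ 3 * (g m * g n)))
      = (-1) ^ (m + n + 1) * (((m + 1).factorial : ℚ) * ((n + 1).factorial : ℚ)) ^ 2
        / (((m : ℚ) + (n : ℚ) + 2) * ((m : ℚ) + (n : ℚ) + 3)) := by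
  rw [X3_split, derivative_add, map_add, ← smul_eq_C_mul, derivative_smul, map_smul,
    smul_eq_mul, Lam1, Lam1]
  have hd2 : ((m : ℚ) + (n : ℚ) + 2) ≠ 0 := by positivity
  have hd3 : ((m : ℚ) + (n : ℚ) + 3) ≠ 0 := by positivity
  rw [show m + 1 + 1 = m + 2 from rfl, fact2 m, fact1 m, fact1 n]
  push_cast
  have hd2' : ((m : ℚ) + 1 + (n : ℚ) + 2) ≠ 0 := by positivity
  field_simp
  ring

lemma M_add (p q : Polynomial ℚ) : M (p + q) = M p + M q :=
  Polynomial.sum_add_index p q _ (fun n => by simp) (fun n a b => by ring)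

lemma M_monomial (n : ℕ) (a : ℚ) :
    M (monomial n a) = a * (-1) ^ n * _root_.bernoulli (n + 4) * ((n : ℚ) + 5) / 2 :=
  Polynomial.sum_monomial_index a _ (by simp)

lemma bern_flip (n : ℕ) :
    ((-1 : ℚ)) ^ n * _root_.bernoulli (n + 4) = bernoulli' (n + 4) := by
  rw [bernoulli_eq_bernoulli'_of_ne_one (by omega)]
  rcases Nat.even_or_odd n with he | ho
  · rw [he.neg_one_pow, one_mul]
  · have h4 : Odd (n + 4) := ho.add_even (by decide)
    rw [bernoulli'_eq_zero_of_odd h4 (by omega), mul_zero]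

lemma M_eq (p : Polynomial ℚ) : M p = L (derivative ((X : Polynomial ℚ) ^ 5 * p)) / 2 := by
  induction p using Polynomial.induction_on' with
  | add p q hp hq => rw [mul_add, derivative_add, map_add, M_add, hp, hq]; ring
  | monomial n a =>
    rw [M_monomial]
    have h5 : (X : Polynomial ℚ) ^ 5 * monomial n a = monomial (5 + n) a := by
      rw [X_pow_eq_monomial, monomial_mul_monomial, one_mul]
    rw [h5, derivative_monomial, show 5 + n - 1 = n + 4 from by omega, L_monomial,
      ← bern_flip]
    push_cast
    ring

lemma binom_prod (k : ℕ) :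
    binomXm1 k * binomXpk k = C ((k.factorial : ℚ))⁻¹ * C ((k.factorial : ℚ))⁻¹ * P k := by
  rw [binomXm1, binomXpk, smul_eq_C_mul, smul_eq_C_mul, mul_mul_mul_comm]
  congr 1
  rw [← prod_mul_distrib]
  refine Finset.prod_congr rfl fun i _ => ?_
  have hc : C ((i : ℚ) + 1) = ((i : Polynomial ℚ) + 1) := by
    simp [map_add, C_eq_natCast]
  rw [hc]
  ring

end MAux

open MAux

theorem M_binom_four_product (k j : ℕ) :
    M (binomXm1 k * binomXpk k * (binomXm1 j * binomXpk j)) =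
      (-1) ^ (k + j + 1) * ((k : ℚ) + 1) ^ 2 * ((j : ℚ) + 1) ^ 2 /
        (2 * ((k : ℚ) + (j : ℚ) + 3) * ((k : ℚ) + (j : ℚ) + 2)) := by
  have hq : (X : Polynomial ℚ) ^ 5 * (binomXm1 k * binomXpk k * (binomXm1 j * binomXpk j))
      = C ((k.factorial : ℚ)⁻¹ * (k.factorial : ℚ)⁻¹ * (j.factorial : ℚ)⁻¹
            * (j.factorial : ℚ)⁻¹)
        * ((X : Polynomial ℚ) ^ 3 * (g k * g j)) := by
    rw [binom_prod, binom_prod, g, g, map_mul, map_mul, map_mul]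
    ring
  rw [M_eq, hq, ← smul_eq_C_mul, derivative_smul, map_smul, smul_eq_mul, Lam3]
  have hk : (k.factorial : ℚ) ≠ 0 := Nat.cast_ne_zero.mpr k.factorial_ne_zero
  have hj : (j.factorial : ℚ) ≠ 0 := Nat.cast_ne_zero.mpr j.factorial_ne_zero
  have h2 : ((k : ℚ) + (j : ℚ) + 2) ≠ 0 := by positivity
  have h3 : ((k : ℚ) + (j : ℚ) + 3) ≠ 0 := by positivity
  rw [fact1 k, fact1 j]
  field_simp
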